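/- Let O be a 0-orientation on a connected graph G. The following are equivalent: (a) O is totally cyclic; (b) t^O(Z) > 0 for every nonempty Z ⊊ V; (c) t^O(Z) > 0 for every nonempty Z ⊊ V with G[Z] connected; (d) |d^O_Z| > g(Z) − 1 for every nonempty Z ⊊ V with G[Z] connected. -/

import Mathlib

/-!
Common framework: finite vertex-weighted multigraphs (loops and multiple edges
allowed), generalized orientations, divisors, contractions, and poset gadgets.

A graph is encoded by a finite set `V ⊆ ℕ` of vertices, a finite set `E ⊆ ℕ`
of edges, an "ends" function assigning to each edge its ordered pair of
end-vertices (the two components encode the two half-edges), and a weight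
function `w : ℕ → ℕ`.

A generalized orientation is a function `ℕ → Option EdgeDir`, where `none`
means the edge is absent (an orientation on a spanning subgraph `G − S` takes
the value `none` exactly on edges outside `E \ S`), `fwd`/`bwd` give the edge a
single direction, and `bi` makes the edge bioriented.
-/

open scoped Classical
open Finset

/-- Direction of an edge under a generalized orientation. -/
inductive EdgeDir : Type
  | fwd
  | bwd
  | bi
deriving DecidableEq

/-- Generalized orientation data. -/
abbrev Orient : Type := ℕ → Option EdgeDir

/-- The number of ending (target) half-edges at the vertex `v` of an edge with
end-pair `p`, given its direction `d`.  A one-way oriented edge has exactly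
one target end; a bioriented edge has both ends as targets. -/
def dirT : Option EdgeDir → ℕ × ℕ → ℕ → ℕ
  | none, _, _ => 0
  | some EdgeDir.fwd, p, v => if p.2 = v then 1 else 0
  | some EdgeDir.bwd, p, v => if p.1 = v then 1 else 0
  | some EdgeDir.bi, p, v => (if p.1 = v then 1 else 0) + (if p.2 = v then 1 else 0)

/-- Restriction of orientation data to the set `D` of kept edges. -/
def restr (O : Orient) (D : Finset ℕ) : Orient := fun e => if e ∈ D then O e else none

/-- A finite vertex-weighted multigraph. -/
structure MGraph : Type where
  V : Finset ℕ
  E : Finset ℕ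
  ends : ℕ → ℕ × ℕ
  w : ℕ → ℕ
  ends_mem : ∀ e ∈ E, (ends e).1 ∈ V ∧ (ends e).2 ∈ V

namespace MGraph

variable (G : MGraph)

/-- Edge set of the induced subgraph `(G−S)[Z]`: edges of `G − S` with both
ends in `Z`. -/
def indEdges (S Z : Finset ℕ) : Finset ℕ :=
  (G.E \ S).filter fun e => (G.ends e).1 ∈ Z ∧ (G.ends e).2 ∈ Z

/-- The cut `E(Z, Zᶜ)` in `G − S`: edges of `G − S` with exactly one end in `Z`. -/
def cutEdges (S Z : Finset ℕ) : Finset ℕ :=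
  (G.E \ S).filter fun e =>
    ((G.ends e).1 ∈ Z ∧ (G.ends e).2 ∉ Z) ∨ ((G.ends e).1 ∉ Z ∧ (G.ends e).2 ∈ Z)

/-- Adjacency via an edge belonging to `F ∩ E`. -/
def adjOn (F : Finset ℕ) (u v : ℕ) : Prop :=
  ∃ e ∈ F ∩ G.E, G.ends e = (u, v) ∨ G.ends e = (v, u)

/-- Number of connected components of the subgraph with vertex set `W` and
edge set `F`. -/
noncomputable def ncomp (W F : Finset ℕ) : ℕ :=
  Nat.card (Quot (fun u v : {x : ℕ // x ∈ W} => G.adjOn F u.1 v.1))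

/-- The subgraph with vertex set `W` and edge set `F` is connected. -/
def ConnSub (W F : Finset ℕ) : Prop := G.ncomp W F = 1

/-- `G` is connected. -/
def Connected : Prop := G.ConnSub G.V G.E

/-- Genus of the subgraph with vertex set `W` and edge set `F`:
`∑_{v ∈ W} w(v) − |W| + |F| + c`. -/
noncomputable def subGenus (W F : Finset ℕ) : ℤ :=
  (∑ v ∈ W, (G.w v : ℤ)) - (W.card : ℤ) + (((F ∩ G.E).card : ℤ)) + (G.ncomp W F : ℤ)

/-- The genus of `G`. -/
noncomputable def genus : ℤ := G.subGenus G.V G.E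

/-- The degree of a vertex: the number of half-edges having `v` as end. -/
def deg (v : ℕ) : ℕ :=
  ∑ e ∈ G.E, ((if (G.ends e).1 = v then 1 else 0) + (if (G.ends e).2 = v then 1 else 0))

/-- `e` is a bridge of `G − S`: removing it increases the number of connected
components. -/
def IsBridge (S : Finset ℕ) (e : ℕ) : Prop :=
  e ∈ G.E \ S ∧ G.ncomp G.V (G.E \ S) < G.ncomp G.V (G.E \ insert e S)

/-- The set of bridges of `G − S`. -/
noncomputable def bridges (S : Finset ℕ) : Finset ℕ := (G.E \ S).filter (G.IsBridge S)

/-- `T` is a cut of `G`, i.e. `T = E(Z, Zᶜ)` for some `∅ ⊊ Z ⊊ V`. -/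
def IsCut (T : Finset ℕ) : Prop :=
  ∃ Z, Z ⊆ G.V ∧ Z.Nonempty ∧ Z ≠ G.V ∧ T = G.cutEdges ∅ Z

/-- `W` is (the vertex set of) a connected component of `G − S`. -/
def IsCompOf (S W : Finset ℕ) : Prop :=
  W ⊆ G.V ∧ W.Nonempty ∧ G.ConnSub W (G.indEdges S W) ∧ G.cutEdges S W = ∅

/-- The poset `A^b_G`: for `b = 0` the sets `S ⊆ E` with `G − S` bridgeless,
for `b = 1` the sets `S ⊆ E` with `G − S` connected. -/
def Ab (b : ℕ) (S : Finset ℕ) : Prop :=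
  S ⊆ G.E ∧ ((b = 0 ∧ ∀ e, ¬ G.IsBridge S e) ∨ (b = 1 ∧ G.ConnSub G.V (G.E \ S)))

/-- `G` is a stable graph of genus `g`: connected, of genus `g`, and every
vertex of weight `0` has degree at least `3`. -/
noncomputable def Stable (g : ℕ) : Prop :=
  G.Connected ∧ G.genus = (g : ℤ) ∧ ∀ v ∈ G.V, G.w v = 0 → 3 ≤ G.deg v

/-! ### Generalized orientations on spanning subgraphs -/

/-- `O` is orientation data for the spanning subgraph `G − S` (it is defined
exactly on the edges of `G − S`). -/
def IsOrientOn (S : Finset ℕ) (O : Orient) : Prop :=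
  ∀ e, O e ≠ none ↔ e ∈ G.E \ S

/-- The set of bioriented edges of `O`. -/
def biE (O : Orient) : Finset ℕ := G.E.filter fun e => O e = some EdgeDir.bi

/-- `t^O_v`: the number of half-edges having `v` as target. -/
def tOr (O : Orient) (v : ℕ) : ℕ := ∑ e ∈ G.E, dirT (O e) (G.ends e) v

/-- `t^O(Z)`: the number of edges of `G − S` not contained in `(G−S)[Z]`
having a target in `Z`. -/
def tCut (S : Finset ℕ) (O : Orient) (Z : Finset ℕ) : ℕ :=
  ∑ e ∈ (G.E \ S) \ G.indEdges S Z, ∑ v ∈ Z, dirT (O e) (G.ends e) v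

/-- The divisor `d^O` of a `b`-orientation `O` on `G − S`:
`d^O_v = w(v) − 1 + t^O_v` if `G − S` has edges, and `d^O_v = w(v) − 1 + b`
otherwise; it is supported on `V`. -/
noncomputable def divOr (S : Finset ℕ) (b : ℕ) (O : Orient) : ℕ → ℤ :=
  fun v => if v ∈ G.V then
      (if G.E \ S = ∅ then (G.w v : ℤ) - 1 + (b : ℤ) else (G.w v : ℤ) - 1 + (G.tOr O v : ℤ))
    else 0

/-- Equivalence of generalized orientations on `G − S`:  both are orientations
on `G − S` and they have the same divisor. -/
noncomputable def equivOr (S : Finset ℕ) (b : ℕ) (O O' : Orient) : Prop :=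
  G.IsOrientOn S O ∧ G.IsOrientOn S O' ∧ G.divOr S b O = G.divOr S b O'

/-- `O` is a totally cyclic orientation on `G − S`: every nonempty cut
`E(Z,Zᶜ)` contains an edge with target in `Z` and an edge with target in `Zᶜ`. -/
def TotCyc (S : Finset ℕ) (O : Orient) : Prop :=
  ∀ Z : Finset ℕ, Z ⊆ G.V → Z.Nonempty → Z ≠ G.V → (G.cutEdges S Z).Nonempty →
    (∃ e ∈ G.cutEdges S Z, ∃ v ∈ Z, 0 < dirT (O e) (G.ends e) v) ∧
    (∃ e ∈ G.cutEdges S Z, ∃ v ∈ G.V \ Z, 0 < dirT (O e) (G.ends e) v)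

/-- `O` is `e₀`-rooted on `G − S`: for every `Z ⊊ V` with `e₀` an edge of
`(G−S)[Z]`, the cut `E(Z,Zᶜ)` contains an edge with target in `Zᶜ`. -/
def RootedAt (S : Finset ℕ) (O : Orient) (e₀ : ℕ) : Prop :=
  ∀ Z : Finset ℕ, Z ⊆ G.V → Z ≠ G.V → e₀ ∈ G.indEdges S Z →
    ∃ e ∈ G.cutEdges S Z, ∃ v ∈ G.V \ Z, 0 < dirT (O e) (G.ends e) v

/-- `O` is a rooted `1`-orientation on `G − S`:  it has exactly one bioriented
edge, at which it is rooted.  By convention, if `G − S` consists of a single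
vertex (and no edges), the empty orientation is rooted. -/
def Rooted1 (S : Finset ℕ) (O : Orient) : Prop :=
  (∃ e₀, G.biE O = {e₀} ∧ G.RootedAt S O e₀) ∨ (G.E \ S = ∅ ∧ G.V.card = 1)

/-- `O ∈ 𝒪^b(G−S)`:  for `b = 0`, a totally cyclic orientation on `G − S`;
for `b = 1`, a rooted `1`-orientation on `G − S`. -/
def MemOb (S : Finset ℕ) (b : ℕ) (O : Orient) : Prop :=
  G.IsOrientOn S O ∧
    ((b = 0 ∧ G.biE O = ∅ ∧ G.TotCyc S O) ∨ (b = 1 ∧ G.Rooted1 S O))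

/-- `O` is a `b`-orientation on `G − S` (exactly `b` bioriented edges; by
convention the empty orientation on a one-vertex edgeless graph counts as a
`1`-orientation). -/
def IsbOr (S : Finset ℕ) (b : ℕ) (O : Orient) : Prop :=
  G.IsOrientOn S O ∧
    ((G.biE O).card = b ∨ (G.E \ S = ∅ ∧ G.V.card = 1 ∧ b = 1))

/-! ### Posets of orientations on spanning subgraphs -/

/-- The order of `𝒪𝒫^b_G` on pairs `(S, O_S)`:  `(S,O_S) ≤ (T,O_T)` iff
`T ⊆ S` and the restriction of `O_T` to `G − S` is `O_S`. -/
def leOP (p q : Finset ℕ × Orient) : Prop :=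
  q.1 ⊆ p.1 ∧ restr q.2 (G.E \ p.1) = p.2

/-- The order of `𝒪̄𝒫^b_G` on pairs (representing classes): `(S,O̅_S) ≤ (T,O̅_T)`
iff `T ⊆ S` and some representative of `O̅_T` restricts on `G − S` to some
representative of `O̅_S`. -/
noncomputable def leOPbar (b : ℕ) (p q : Finset ℕ × Orient) : Prop :=
  q.1 ⊆ p.1 ∧ ∃ O', G.equivOr q.1 b O' q.2 ∧
    G.equivOr p.1 b (restr O' (G.E \ p.1)) p.2

/-- Equality in `𝒪̄𝒫^b_G`: same subgraph and equivalent orientations. -/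
noncomputable def eqOP (b : ℕ) (p q : Finset ℕ × Orient) : Prop :=
  p.1 = q.1 ∧ G.equivOr p.1 b p.2 q.2

/-- Membership in `𝒪𝒫^b_G`. -/
def POb (b : ℕ) (p : Finset ℕ × Orient) : Prop :=
  G.Ab b p.1 ∧ G.MemOb p.1 b p.2

/-! ### Stable divisors -/

/-- Stable divisors on `G − S` of degree `g(G−S) − c(G−S) + b` (`b = 0, 1`):
for `b = 1`, `G − S` is connected, the degree is `g(G−S)` and
`|d_Z| > g(Z) − 1` for every `Z ⊆ V`; for `b = 0`, the restriction of `d` to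
every connected component `W` of `G − S` has degree `g(W) − 1` and satisfies
`|d_Z| > g(Z) − 1` for every `∅ ≠ Z ⊊ W`. -/
noncomputable def StableDiv (S : Finset ℕ) (b : ℕ) (d : ℕ → ℤ) : Prop :=
  (∀ v, v ∉ G.V → d v = 0) ∧
  ((b = 1 ∧ G.ConnSub G.V (G.E \ S) ∧
      (∑ v ∈ G.V, d v) = G.subGenus G.V (G.E \ S) ∧
      ∀ Z ⊆ G.V, G.subGenus Z (G.indEdges S Z) - 1 < ∑ v ∈ Z, d v) ∨
   (b = 0 ∧ ∀ W, G.IsCompOf S W →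
      (∑ v ∈ W, d v) = G.subGenus W (G.indEdges S W) - 1 ∧
      ∀ Z ⊆ W, Z.Nonempty → Z ≠ W →
        G.subGenus Z (G.indEdges S Z) - 1 < ∑ v ∈ Z, d v))

/-! ### Contractions -/

/-- The relation identifying the two ends of each edge in `S₀`. -/
def conRel (S₀ : Finset ℕ) (u v : ℕ) : Prop :=
  ∃ e ∈ S₀ ∩ G.E, G.ends e = (u, v) ∨ G.ends e = (v, u)

/-- Representative (the least element) of the class of `v` under the
equivalence generated by identifying the ends of the edges in `S₀`. -/
noncomputable def crep (S₀ : Finset ℕ) (v : ℕ) : ℕ :=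
  sInf {u | Relation.EqvGen (G.conRel S₀) u v}

/-- The (weighted) edge contraction `G/S₀`: every connected component of the
subgraph spanned by `S₀` is contracted to a single vertex, whose weight is the
genus of that component; `E(G/S₀) = E(G) \ S₀`. -/
noncomputable def contract (S₀ : Finset ℕ) : MGraph where
  V := G.V.image (G.crep S₀)
  E := G.E \ S₀
  ends := fun e => (G.crep S₀ (G.ends e).1, G.crep S₀ (G.ends e).2)
  w := fun v =>
    (G.subGenus (G.V.filter fun u => G.crep S₀ u = v)
      (G.indEdges (G.E \ S₀) (G.V.filter fun u => G.crep S₀ u = v))).toNat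
  ends_mem := by
    intro e he
    rw [Finset.mem_sdiff] at he
    exact ⟨Finset.mem_image_of_mem _ (G.ends_mem e he.1).1,
           Finset.mem_image_of_mem _ (G.ends_mem e he.1).2⟩

/-- Deletion of the edges in `T` (a spanning subgraph, as a graph). -/
def ddel (T : Finset ℕ) : MGraph where
  V := G.V
  E := G.E \ T
  ends := G.ends
  w := G.w
  ends_mem := fun e he => G.ends_mem e (Finset.mem_sdiff.mp he).1

/-- Pullback `γ* T` of an edge set along the contraction `γ : G → G/S₀`:
`T ∪ (G−T)_br` for `b = 0`, and `T` for `b = 1`. -/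
noncomputable def pullStar (b : ℕ) (T : Finset ℕ) : Finset ℕ :=
  if b = 0 then T ∪ G.bridges T else T

/-- Pushforward of a divisor along the contraction `γ : G → G/S₀`:
`(γ_* d)_v = ∑_{z ∈ γ⁻¹(v)} d_z`. -/
noncomputable def pushDiv (S₀ : Finset ℕ) (d : ℕ → ℤ) : ℕ → ℤ :=
  fun v => ∑ z ∈ G.V.filter (fun u => G.crep S₀ u = v), d z

/-- The divisor `c^{γ,S}` on `G/S₀`: `c^{γ,S}_v = #{e ∈ S₀ ∩ S : γ(e) = v}`. -/
noncomputable def cGamma (S₀ S : Finset ℕ) : ℕ → ℤ :=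
  fun v => ((((S₀ ∩ S) ∩ G.E).filter (fun e => G.crep S₀ (G.ends e).1 = v)).card : ℤ)

/-- The relation "`q` is a value of `γ̄_*` at `p`" for the contraction
`γ : G → G/S₀` acting on classes of orientations: `q` is the restriction to
`(G/S₀) − γ_* S` of a representative of the class of `p` having no bioriented
edge in `S₀` (when `(G/S₀) − γ_*S` has no edges, any representative serves). -/
noncomputable def pushRel (S₀ : Finset ℕ) (b : ℕ) (p q : Finset ℕ × Orient) : Prop :=
  ∃ O', G.equivOr p.1 b O' p.2 ∧
    ((∀ e ∈ S₀, O' e ≠ some EdgeDir.bi) ∨ G.E \ (S₀ ∪ p.1) = ∅) ∧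
    q.1 = p.1 \ S₀ ∧ q.2 = restr O' (G.E \ (S₀ ∪ p.1))

/-! ### Isomorphisms and directed reachability -/

/-- `(fV, fE)` is an isomorphism from `G` to `H`. -/
def IsoMaps (H : MGraph) (fV fE : ℕ → ℕ) : Prop :=
  Set.BijOn fV ↑G.V ↑H.V ∧ Set.BijOn fE ↑G.E ↑H.E ∧
  (∀ e ∈ G.E, H.ends (fE e) = (fV (G.ends e).1, fV (G.ends e).2) ∨
              H.ends (fE e) = (fV (G.ends e).2, fV (G.ends e).1)) ∧
  (∀ v ∈ G.V, H.w (fV v) = G.w v)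

/-- `G` and `H` are isomorphic graphs. -/
def Iso (H : MGraph) : Prop := ∃ fV fE, G.IsoMaps H fV fE

/-- The edge-contraction relation: `G ≤ H` iff `H = G/S₀` (up to isomorphism)
for some `S₀ ⊆ E(G)`. -/
noncomputable def contractLE (H : MGraph) : Prop :=
  ∃ S₀ ⊆ G.E, (G.contract S₀).Iso H

/-- One step from `u` to `v` along an `O`-directed edge (a bioriented edge may
be traversed in both directions). -/
def dirStep (O : Orient) (u v : ℕ) : Prop :=
  ∃ e ∈ G.E,
    (O e = some EdgeDir.fwd ∧ G.ends e = (u, v)) ∨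
    (O e = some EdgeDir.bwd ∧ G.ends e = (v, u)) ∨
    (O e = some EdgeDir.bi ∧ (G.ends e = (u, v) ∨ G.ends e = (v, u)))

/-- There is an `O`-directed path from the (bioriented) edge `e` to the
vertex `v`: a directed path starting at one of the ends of `e` and ending
at `v`. -/
def dirReachFromEdge (O : Orient) (e v : ℕ) : Prop :=
  ∃ u, ((G.ends e).1 = u ∨ (G.ends e).2 = u) ∧
    Relation.ReflTransGen (G.dirStep O) u v

end MGraph

/-! ### Generic poset gadgets (for sets with an order, modulo an equivalence) -/

/-- `le` is a partial order on `{a | P a}` modulo the identification `eqv`. -/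
def IsPartialOrderOnMod {α : Type*} (P : α → Prop) (eqv le : α → α → Prop) : Prop :=
  (∀ a, P a → le a a) ∧
  (∀ a b c, P a → P b → P c → le a b → le b c → le a c) ∧
  (∀ a b, P a → P b → le a b → le b a → eqv a b)

/-- `le` is a partial order on `{a | P a}`. -/
def IsPartialOrderOn {α : Type*} (P : α → Prop) (le : α → α → Prop) : Prop :=
  IsPartialOrderOnMod P (· = ·) le

/-- `a'` covers `a` in `{a | P a}` ordered by `le`, modulo `eqv`. -/
def CoversOnMod {α : Type*} (P : α → Prop) (eqv le : α → α → Prop) (a a' : α) : Prop :=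
  P a ∧ P a' ∧ le a a' ∧ ¬ eqv a a' ∧
    ∀ c, P c → le a c → le c a' → (eqv c a ∨ eqv c a')

/-- `ρ` is a rank on `{a | P a}` ordered by `le`, modulo `eqv`:  along every
covering relation it increases by exactly `1`. -/
def IsRankOnMod {α : Type*} (P : α → Prop) (eqv le : α → α → Prop) (ρ : α → ℕ) : Prop :=
  ∀ a a', CoversOnMod P eqv le a a' → ρ a' = ρ a + 1

/-- `a'` covers `a` in `{a | P a}` ordered by `le`. -/
def CoversOn {α : Type*} (P : α → Prop) (le : α → α → Prop) : α → α → Prop :=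
  CoversOnMod P (· = ·) le

/-- `ρ` is a rank on `{a | P a}` ordered by `le`. -/
def IsRankOn {α : Type*} (P : α → Prop) (le : α → α → Prop) (ρ : α → ℕ) : Prop :=
  IsRankOnMod P (· = ·) le ρ

/-- `f` is a quotient of posets from `({a | P a}, lea)` onto `({b | Q b}, leb)`:
an order-preserving surjection such that any relation downstairs lifts to a
relation upstairs. -/
def IsPosetQuotient {α β : Type*} (P : α → Prop) (Q : β → Prop)
    (lea : α → α → Prop) (leb : β → β → Prop) (f : α → β) : Prop :=
  (∀ a, P a → Q (f a)) ∧
  (∀ a a', P a → P a' → lea a a' → leb (f a) (f a')) ∧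
  (∀ b, Q b → ∃ a, P a ∧ f a = b) ∧
  (∀ b b', Q b → Q b' → leb b b' →
    ∃ a a', P a ∧ P a' ∧ f a = b ∧ f a' = b' ∧ lea a a')

/-! ### Structures over the moduli of stable graphs -/

/-- Pairs `(G, S)` with `G` stable of genus `g` and `S ∈ A^b_G`. -/
noncomputable def PairStab (g b : ℕ) (p : MGraph × Finset ℕ) : Prop :=
  p.1.Stable g ∧ p.1.Ab b p.2

/-- Isomorphism of pairs `(G, S)`. -/
def PairIso (p q : MGraph × Finset ℕ) : Prop :=
  ∃ fV fE, p.1.IsoMaps q.1 fV fE ∧ p.2.image fE = q.2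

/-- The order on `A^b_g`: `(G,S) ≤ (H,T)` iff there is a contraction
`γ : G → H` (a contraction of `G` followed by an isomorphism onto `H`) with
`γ* T ⊆ S`. -/
noncomputable def AgLE (b : ℕ) (p q : MGraph × Finset ℕ) : Prop :=
  ∃ S₀ ⊆ p.1.E, ∃ fV fE, (p.1.contract S₀).IsoMaps q.1 fV fE ∧
    p.1.pullStar b (((p.1.contract S₀).E).filter fun e => fE e ∈ q.2) ⊆ p.2

/-- Triples `(G, S, O̅_S)` with `G` stable of genus `g`, `S ∈ A^b_G` and
`O_S ∈ 𝒪^b(G−S)` (representing elements of `𝒪̄𝒫^b_g`). -/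
noncomputable def TripP (g b : ℕ) (x : MGraph × Finset ℕ × Orient) : Prop :=
  x.1.Stable g ∧ x.1.Ab b x.2.1 ∧ x.1.MemOb x.2.1 b x.2.2

/-- Identification of triples: an isomorphism of the underlying graphs
carrying the subgraph and the class of the orientation (i.e. its divisor) of
one to the other. -/
noncomputable def TripEq (b : ℕ) (x y : MGraph × Finset ℕ × Orient) : Prop :=
  ∃ fV fE, x.1.IsoMaps y.1 fV fE ∧ x.2.1.image fE = y.2.1 ∧
    ∀ v ∈ x.1.V, y.1.divOr y.2.1 b y.2.2 (fV v) = x.1.divOr x.2.1 b x.2.2 v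

/-- The order on `𝒪̄𝒫^b_g`: `(G, O̅_S) ≤ (H, O̅_T)` iff there is a contraction
`γ : G → H` with `γ* T ⊆ S` and `γ̄_* O̅_S ≤ O̅_T`, the latter meaning that the
restriction of `O̅_T` to `H − γ_* S` equals `γ̄_* O̅_S` (compared through the
isomorphism, via the divisors). -/
noncomputable def OPgLE (b : ℕ) (x y : MGraph × Finset ℕ × Orient) : Prop :=
  ∃ S₀ ⊆ x.1.E, ∃ fV fE, (x.1.contract S₀).IsoMaps y.1 fV fE ∧
    x.1.pullStar b (((x.1.contract S₀).E).filter fun e => fE e ∈ y.2.1) ⊆ x.2.1 ∧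
    ∃ O', x.1.equivOr x.2.1 b O' x.2.2 ∧
      ((∀ e ∈ S₀, O' e ≠ some EdgeDir.bi) ∨ x.1.E \ (S₀ ∪ x.2.1) = ∅) ∧
      ∀ v ∈ (x.1.contract S₀).V,
        y.1.divOr ((x.2.1 \ S₀).image fE) b
            (restr y.2.2 (y.1.E \ (x.2.1 \ S₀).image fE)) (fV v)
          = (x.1.contract S₀).divOr (x.2.1 \ S₀) b
              (restr O' (x.1.E \ (S₀ ∪ x.2.1))) v
/-!
An edge that is not inside `G[Z]` but has a target in `Z` must cross the cut `E(Z, Zᶜ)`, so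
`t^O(Z) > 0` says exactly that some edge of the cut points into `Z`. Applying this to `Z` and
to `Zᶜ` gives (a) ⟺ (b), because in a connected graph every proper cut is nonempty. If `W` is a
connected component of `G[Z]`, an edge counted by `t^O(W)` cannot lie in `G[Z]`, so it is also
counted by `t^O(Z)`; this gives (c) ⟹ (b). Finally every edge of `G[Z]` has exactly one target
in `Z`, whence `∑_{v ∈ Z} t^O_v = |E(G[Z])| + t^O(Z)`, i.e. `|d^O_Z| = g(Z) − 1 + t^O(Z)` when
`G[Z]` is connected, which is (c) ⟺ (d).
-/

open Relation

lemma eq_or_eq_of_dirT_pos {o : Option EdgeDir} {p : ℕ × ℕ} {v : ℕ} (h : 0 < dirT o p v) :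
    p.1 = v ∨ p.2 = v := by
  by_contra! hne
  rcases o with _ | _ | _ | _ <;> simp [dirT, hne.1, hne.2] at h

lemma sum_dirT_eq_one {o : EdgeDir} (ho : o ≠ EdgeDir.bi) {p : ℕ × ℕ} {Z : Finset ℕ}
    (h₁ : p.1 ∈ Z) (h₂ : p.2 ∈ Z) : ∑ v ∈ Z, dirT (some o) p v = 1 := by
  cases o <;> simp_all [dirT]

namespace MGraph

variable {G : MGraph} {S Z : Finset ℕ} {O : Orient}

lemma mem_cutEdges_of_dirT_pos {e v : ℕ} (he : e ∈ (G.E \ S) \ G.indEdges S Z) (hv : v ∈ Z)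
    (hd : 0 < dirT (O e) (G.ends e) v) : e ∈ G.cutEdges S Z := by
  obtain ⟨heS, hnot⟩ := mem_sdiff.mp he
  simp only [indEdges, mem_filter, heS, true_and] at hnot
  refine mem_filter.mpr ⟨heS, ?_⟩
  rcases eq_or_eq_of_dirT_pos hd with rfl | rfl <;> tauto

lemma cutEdges_subset_sdiff_indEdges : G.cutEdges S Z ⊆ (G.E \ S) \ G.indEdges S Z := by
  intro e he
  simp only [cutEdges, indEdges, mem_filter, mem_sdiff] at he ⊢
  tauto

lemma tCut_pos_iff :
    0 < G.tCut S O Z ↔ ∃ e ∈ G.cutEdges S Z, ∃ v ∈ Z, 0 < dirT (O e) (G.ends e) v := by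
  simp only [tCut, Finset.sum_pos_iff]
  constructor
  · rintro ⟨e, he, v, hv, hd⟩
    exact ⟨e, mem_cutEdges_of_dirT_pos he hv hd, v, hv, hd⟩
  · rintro ⟨e, he, v, hv, hd⟩
    exact ⟨e, cutEdges_subset_sdiff_indEdges he, v, hv, hd⟩

variable (G) in
lemma cutEdges_sdiff (S Z : Finset ℕ) : G.cutEdges S (G.V \ Z) = G.cutEdges S Z := by
  refine filter_congr fun e he => ?_
  have hends := G.ends_mem e (mem_sdiff.mp he).1
  simp only [mem_sdiff, hends.1, hends.2, true_and]
  tauto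

lemma ConnSub.iff_of_adjOn {W F : Finset ℕ} (h : G.ConnSub W F) (P : ℕ → Prop)
    (hP : ∀ u v, G.adjOn F u v → (P u ↔ P v)) {u v : ℕ} (hu : u ∈ W) (hv : v ∈ W) :
    P u ↔ P v := by
  have : Subsingleton (Quot fun a b : {x // x ∈ W} => G.adjOn F a.1 b.1) :=
    (Nat.card_eq_one_iff_unique.mp h).1
  have hmk := congrArg (Quot.lift (fun a : {x // x ∈ W} => P a.1) fun a b hab =>
    propext (hP a.1 b.1 hab)) (Subsingleton.elim (Quot.mk _ ⟨u, hu⟩) (Quot.mk _ ⟨v, hv⟩))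
  exact Eq.to_iff hmk

lemma connSub_of_forall_mk_eq {W F : Finset ℕ} {z : ℕ} (hz : z ∈ W)
    (h : ∀ u (hu : u ∈ W), Quot.mk (fun a b : {x // x ∈ W} => G.adjOn F a.1 b.1) ⟨z, hz⟩ =
      Quot.mk _ ⟨u, hu⟩) :
    G.ConnSub W F := by
  refine Nat.card_eq_one_iff_unique.mpr ⟨⟨fun a b => ?_⟩, ⟨Quot.mk _ ⟨z, hz⟩⟩⟩
  induction a using Quot.ind
  induction b using Quot.ind
  exact (h _ _).symm.trans (h _ _)

lemma cutEdges_nonempty (hG : G.ConnSub G.V (G.E \ S)) (hZV : Z ⊆ G.V) (hZ : Z.Nonempty)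
    (hZV' : Z ≠ G.V) : (G.cutEdges S Z).Nonempty := by
  by_contra hcut
  have hstep : ∀ u v, G.adjOn (G.E \ S) u v → (u ∈ Z ↔ v ∈ Z) := by
    rintro u v ⟨e, he, hends⟩
    have hnot : e ∉ G.cutEdges S Z := fun he' => hcut ⟨e, he'⟩
    simp only [cutEdges, mem_filter, (mem_inter.mp he).1, true_and] at hnot
    rcases hends with h | h <;> rw [h] at hnot <;> tauto
  obtain ⟨z, hz⟩ := hZ
  obtain ⟨y, hyV, hyZ⟩ := not_subset.mp fun h => hZV' (Subset.antisymm hZV h)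
  exact hyZ ((hG.iff_of_adjOn (· ∈ Z) hstep (hZV hz) hyV).mp hz)

variable (G) in
/-- For `W ⊆ Z`: `W` is a union of connected components of `(G − S)[Z]`. -/
def IsClosedIn (S W Z : Finset ℕ) : Prop :=
  ∀ e ∈ G.indEdges S Z, (G.ends e).1 ∈ W ∨ (G.ends e).2 ∈ W → e ∈ G.indEdges S W

variable (S) in
lemma exists_connSub_isClosedIn (hZ : Z.Nonempty) :
    ∃ W ⊆ Z, W.Nonempty ∧ G.ConnSub W (G.indEdges S W) ∧ G.IsClosedIn S W Z := by
  obtain ⟨z, hz⟩ := hZ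
  set r := G.adjOn (G.indEdges S Z)
  set W := Z.filter (ReflTransGen r z)
  have hzW : z ∈ W := mem_filter.mpr ⟨hz, .refl⟩
  have hends : ∀ e ∈ G.indEdges S Z, (G.ends e).1 ∈ Z ∧ (G.ends e).2 ∈ Z :=
    fun e he => (mem_filter.mp he).2
  have hadj : ∀ e ∈ G.indEdges S Z,
      r (G.ends e).1 (G.ends e).2 ∧ r (G.ends e).2 (G.ends e).1 := fun e he => by
    have he' : e ∈ G.indEdges S Z ∩ G.E :=
      mem_inter.mpr ⟨he, (mem_sdiff.mp (mem_filter.mp he).1).1⟩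
    exact ⟨⟨e, he', .inl rfl⟩, ⟨e, he', .inr rfl⟩⟩
  have hclosed : G.IsClosedIn S W Z := by
    intro e he hW
    refine mem_filter.mpr ⟨(mem_filter.mp he).1, ?_⟩
    rcases hW with h | h
    · exact ⟨h, mem_filter.mpr ⟨(hends e he).2, (mem_filter.mp h).2.tail (hadj e he).1⟩⟩
    · exact ⟨mem_filter.mpr ⟨(hends e he).1, (mem_filter.mp h).2.tail (hadj e he).2⟩, h⟩
  refine ⟨W, filter_subset _ _, ⟨z, hzW⟩, ?_, hclosed⟩
  refine connSub_of_forall_mk_eq hzW fun u hu => ?_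
  have hzu : ReflTransGen r z u := (mem_filter.mp hu).2
  induction hzu with
  | refl => rfl
  | @tail b c hzb hbc ih =>
    obtain ⟨e, he, hbc'⟩ := hbc
    have heZ := (mem_inter.mp he).1
    have hb : b ∈ Z := by
      have := hends e heZ
      rcases hbc' with h | h <;> rw [h] at this
      exacts [this.1, this.2]
    have hbW : b ∈ W := mem_filter.mpr ⟨hb, hzb⟩
    have heW : e ∈ G.indEdges S W := hclosed e heZ (by rcases hbc' with h | h <;> simp [h, hbW])
    exact (ih hbW).trans (Quot.sound ⟨e, mem_inter.mpr ⟨heW, (mem_inter.mp he).2⟩, hbc'⟩)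

lemma tCut_pos_of_isClosedIn {W : Finset ℕ} (hWZ : W ⊆ Z) (hclosed : G.IsClosedIn S W Z)
    (h : 0 < G.tCut S O W) : 0 < G.tCut S O Z := by
  obtain ⟨e, he, v, hv, hd⟩ := tCut_pos_iff.mp h
  have he' := mem_sdiff.mp (cutEdges_subset_sdiff_indEdges he)
  have heZ : e ∉ G.indEdges S Z := fun heZ =>
    he'.2 (hclosed e heZ (by rcases eq_or_eq_of_dirT_pos hd with h | h <;> simp [h, hv]))
  have heZ' : e ∈ (G.E \ S) \ G.indEdges S Z := mem_sdiff.mpr ⟨he'.1, heZ⟩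
  exact tCut_pos_iff.mpr ⟨e, mem_cutEdges_of_dirT_pos heZ' (hWZ hv) hd, v, hWZ hv, hd⟩

lemma forall_tCut_pos_iff_forall_connSub :
    (∀ Z ⊆ G.V, Z.Nonempty → Z ≠ G.V → 0 < G.tCut S O Z) ↔
      ∀ Z ⊆ G.V, Z.Nonempty → Z ≠ G.V → G.ConnSub Z (G.indEdges S Z) →
        0 < G.tCut S O Z := by
  refine ⟨fun h Z hZV hZ hZV' _ => h Z hZV hZ hZV', fun h Z hZV hZ hZV' => ?_⟩
  obtain ⟨W, hWZ, hW, hWconn, hclosed⟩ := G.exists_connSub_isClosedIn S hZ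
  exact tCut_pos_of_isClosedIn hWZ hclosed
    (h W (hWZ.trans hZV) hW (hWZ.trans_ssubset (hZV.ssubset_of_ne hZV')).ne hWconn)

theorem totCyc_iff_forall_tCut_pos (hG : G.ConnSub G.V (G.E \ S)) :
    G.TotCyc S O ↔ ∀ Z ⊆ G.V, Z.Nonempty → Z ≠ G.V → 0 < G.tCut S O Z := by
  refine ⟨fun h Z hZV hZ hZV' => ?_, fun h Z hZV hZ hZV' _ => ?_⟩
  · exact tCut_pos_iff.mpr (h Z hZV hZ hZV' (cutEdges_nonempty hG hZV hZ hZV')).1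
  · have hZc : (G.V \ Z).Nonempty := sdiff_nonempty.mpr fun h => hZV' (Subset.antisymm hZV h)
    have hZc' : G.V \ Z ≠ G.V := fun h => by
      obtain ⟨z, hz⟩ := hZ
      exact (mem_sdiff.mp (h ▸ hZV hz)).2 hz
    obtain ⟨e, he, v, hv, hd⟩ := tCut_pos_iff.mp (h _ sdiff_subset hZc hZc')
    exact ⟨tCut_pos_iff.mp (h Z hZV hZ hZV'), e, G.cutEdges_sdiff S Z ▸ he, v, hv, hd⟩

lemma sum_tOr (hO : G.IsOrientOn S O) (hbi : G.biE O = ∅) (Z : Finset ℕ) :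
    ∑ v ∈ Z, G.tOr O v = (G.indEdges S Z).card + G.tCut S O Z := by
  have hsupp : ∀ e ∈ G.E, e ∉ G.E \ S → ∑ v ∈ Z, dirT (O e) (G.ends e) v = 0 := by
    intro e _ he
    simp [not_not.mp (mt (hO e).mp he), dirT]
  have hone : ∀ e ∈ G.indEdges S Z, ∑ v ∈ Z, dirT (O e) (G.ends e) v = 1 := by
    intro e he
    have heS := (mem_filter.mp he).1
    obtain ⟨o, ho⟩ := Option.ne_none_iff_exists'.mp ((hO e).mpr heS)
    have hbi' : o ≠ EdgeDir.bi := fun h =>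
      filter_eq_empty_iff.mp hbi (mem_sdiff.mp heS).1 (h ▸ ho)
    rw [ho]
    exact sum_dirT_eq_one hbi' (mem_filter.mp he).2.1 (mem_filter.mp he).2.2
  have hind : G.indEdges S Z ⊆ G.E \ S := filter_subset _ _
  calc ∑ v ∈ Z, G.tOr O v = ∑ e ∈ G.E \ S, ∑ v ∈ Z, dirT (O e) (G.ends e) v := by
        simp only [tOr]
        rw [sum_comm]
        exact (sum_subset sdiff_subset hsupp).symm
    _ = ∑ e ∈ G.indEdges S Z, 1 + G.tCut S O Z := by
        rw [tCut, ← sum_congr rfl hone, add_comm, sum_sdiff hind]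
    _ = (G.indEdges S Z).card + G.tCut S O Z := by rw [sum_const, smul_eq_mul, mul_one]

lemma divOr_zero_of_mem (hO : G.IsOrientOn S O) {v : ℕ} (hv : v ∈ G.V) :
    G.divOr S 0 O v = G.w v - 1 + G.tOr O v := by
  by_cases hE : G.E \ S = ∅
  · have htOr : G.tOr O v = 0 := sum_eq_zero fun e _ => by
      simp [not_not.mp (mt (hO e).mp (hE ▸ notMem_empty e)), dirT]
    simp [divOr, hv, hE, htOr]
  · simp [divOr, hv, hE]

lemma sum_divOr_zero (hO : G.IsOrientOn S O) (hbi : G.biE O = ∅) (hZV : Z ⊆ G.V) :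
    ∑ v ∈ Z, G.divOr S 0 O v =
      ∑ v ∈ Z, (G.w v : ℤ) - Z.card + (G.indEdges S Z).card + G.tCut S O Z := by
  have hsum : ∑ v ∈ Z, (G.tOr O v : ℤ) = (G.indEdges S Z).card + G.tCut S O Z := by
    exact_mod_cast sum_tOr hO hbi Z
  rw [sum_congr rfl fun v hv => divOr_zero_of_mem hO (hZV hv), sum_add_distrib, sum_sub_distrib,
    hsum, sum_const, nsmul_one]
  ring

lemma subGenus_indEdges_of_connSub (h : G.ConnSub Z (G.indEdges S Z)) :
    G.subGenus Z (G.indEdges S Z) =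
      ∑ v ∈ Z, (G.w v : ℤ) - Z.card + (G.indEdges S Z).card + 1 := by
  have hsub : G.indEdges S Z ⊆ G.E := (filter_subset _ _).trans sdiff_subset
  rw [subGenus, inter_eq_left.mpr hsub, show G.ncomp Z (G.indEdges S Z) = 1 from h, Nat.cast_one]

lemma tCut_pos_iff_subGenus_sub_one_lt (hO : G.IsOrientOn S O) (hbi : G.biE O = ∅)
    (hZV : Z ⊆ G.V) (hZ : G.ConnSub Z (G.indEdges S Z)) :
    0 < G.tCut S O Z ↔ G.subGenus Z (G.indEdges S Z) - 1 < ∑ v ∈ Z, G.divOr S 0 O v := by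
  rw [subGenus_indEdges_of_connSub hZ, sum_divOr_zero hO hbi hZV]
  omega

end MGraph

/-- Characterizations of totally cyclic `0`-orientations on a
connected graph: (a) totally cyclic ⟺ (b) `t^O(Z) > 0` for every nonempty
`Z ⊊ V` ⟺ (c) idem for connected `G[Z]` ⟺ (d) `|d^O_Z| > g(Z) − 1` for every
nonempty `Z ⊊ V` with `G[Z]` connected. -/
theorem totally_cyclic_tfae (G : MGraph) (hG : G.Connected) (O : Orient)
    (hO : G.IsOrientOn ∅ O) (hbi : G.biE O = ∅) :
    (G.TotCyc ∅ O ↔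
      ∀ Z ⊆ G.V, Z.Nonempty → Z ≠ G.V → 0 < G.tCut ∅ O Z) ∧
    (G.TotCyc ∅ O ↔
      ∀ Z ⊆ G.V, Z.Nonempty → Z ≠ G.V → G.ConnSub Z (G.indEdges ∅ Z) →
        0 < G.tCut ∅ O Z) ∧
    (G.TotCyc ∅ O ↔
      ∀ Z ⊆ G.V, Z.Nonempty → Z ≠ G.V → G.ConnSub Z (G.indEdges ∅ Z) →
        G.subGenus Z (G.indEdges ∅ Z) - 1 < ∑ v ∈ Z, G.divOr ∅ 0 O v) := by
  have hab : G.TotCyc ∅ O ↔ ∀ Z ⊆ G.V, Z.Nonempty → Z ≠ G.V → 0 < G.tCut ∅ O Z :=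
    MGraph.totCyc_iff_forall_tCut_pos (by rwa [sdiff_empty])
  have hac := hab.trans MGraph.forall_tCut_pos_iff_forall_connSub
  refine ⟨hab, hac, hac.trans <| forall₂_congr fun Z hZV => ?_⟩
  exact imp_congr_right fun _ => imp_congr_right fun _ => forall_congr' fun hZ =>
    MGraph.tCut_pos_iff_subGenus_sub_one_lt hO hbi hZV hZ
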